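/- Let α < 0 and let y be a solution of the second Painlevé equation y''(s) = s·y(s) + 2·y(s)³ + α that is bounded on a neighborhood of +∞. Define θ(s) = y'(s)² − s·y(s)² − y(s)⁴ − 2α·y(s). Then θ is nonincreasing on ℝ and θ(s) → 0 as s → +∞. -/

import Mathlib

open MeasureTheory Filter Topology Set


/-- The Painlevé II energy of `u` over a set `I`. -/
noncomputable def EPII (α : ℝ) (u : ℝ → ℝ) (I : Set ℝ) : ℝ :=
  ∫ s in I, ((1:ℝ)/2 * (deriv u s) ^ 2 + 1/2 * s * (u s) ^ 2 + 1/2 * (u s) ^ 4 + α * u s)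

/-- A (classical) solution of the second Painlevé equation `y'' = s y + 2 y³ + α`. -/
def PainleveSol (α : ℝ) (y : ℝ → ℝ) : Prop :=
  ContDiff ℝ 2 y ∧ ∀ s : ℝ, deriv (deriv y) s = s * y s + 2 * (y s) ^ 3 + α

/-- A minimal solution of the second Painlevé equation: it minimizes `E_PII` with respect to
smooth compactly supported perturbations. -/
def MinimalSol (α : ℝ) (y : ℝ → ℝ) : Prop :=
  PainleveSol α y ∧ ∀ φ : ℝ → ℝ, ContDiff ℝ (⊤ : ℕ∞) φ → HasCompactSupport φ →
    EPII α y (tsupport φ) ≤ EPII α (fun s => y s + φ s) (tsupport φ)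

section PainleveAux

lemma my_hd1 {y : ℝ → ℝ} (hy : ContDiff ℝ 2 y) (s : ℝ) :
    HasDerivAt y (deriv y s) s :=
  (hy.differentiable (by norm_num)).differentiableAt.hasDerivAt

lemma my_hd2 {y : ℝ → ℝ} (hy : ContDiff ℝ 2 y) (s : ℝ) :
    HasDerivAt (deriv y) (deriv (deriv y) s) s := by
  have h : ContDiff ℝ 1 (deriv y) := by
    have := (contDiff_succ_iff_deriv (n := 1)).mp (by norm_num at hy ⊢; exact hy)
    exact this.2.2
  exact (h.differentiable (by norm_num)).differentiableAt.hasDerivAt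

lemma my_cont_deriv {y : ℝ → ℝ} (hy : ContDiff ℝ 2 y) : Continuous (deriv y) := by
  have h : ContDiff ℝ 1 (deriv y) := by
    have := (contDiff_succ_iff_deriv (n := 1)).mp (by norm_num at hy ⊢; exact hy)
    exact this.2.2
  exact h.continuous

/-- derivative of θ -/
lemma my_theta_deriv {α : ℝ} {y : ℝ → ℝ} (hy : ContDiff ℝ 2 y)
    (heq : ∀ s : ℝ, deriv (deriv y) s = s * y s + 2 * (y s) ^ 3 + α) (s : ℝ) :
    HasDerivAt (fun s => (deriv y s) ^ 2 - s * (y s) ^ 2 - (y s) ^ 4 - 2 * α * y s)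
      (-(y s) ^ 2) s := by
  have h1 := my_hd1 hy s
  have h2 := my_hd2 hy s
  have H := ((((h2.pow 2).sub ((hasDerivAt_id s).mul (h1.pow 2))).sub (h1.pow 4)).sub
    (h1.const_mul (2 * α)))
  refine HasDerivAt.congr_deriv H ?_
  rw [heq s]; simp only [id_eq, Pi.pow_apply, Nat.cast_ofNat]; ring

/-- monotone on Ici from HasDerivAt with nonneg derivative -/
lemma my_monoOn {f g : ℝ → ℝ} {a : ℝ} (hd : ∀ t ∈ Ici a, HasDerivAt f (g t) t)
    (h0 : ∀ t ∈ Ioi a, 0 ≤ g t) : MonotoneOn f (Ici a) := by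
  apply monotoneOn_of_deriv_nonneg (convex_Ici a)
  · exact fun t ht => (hd t ht).continuousAt.continuousWithinAt
  · rw [interior_Ici]
    exact fun t ht => ((hd t (mem_Ici.mpr (le_of_lt (mem_Ioi.mp ht)))).differentiableAt).differentiableWithinAt
  · rw [interior_Ici]
    intro t ht
    rw [(hd t (mem_Ici.mpr (le_of_lt (mem_Ioi.mp ht)))).deriv]
    exact h0 t ht

/-- monotone on Icc version -/
lemma my_monoOn_Icc {f g : ℝ → ℝ} {a b : ℝ} (hd : ∀ t ∈ Icc a b, HasDerivAt f (g t) t)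
    (h0 : ∀ t ∈ Ioo a b, 0 ≤ g t) : MonotoneOn f (Icc a b) := by
  apply monotoneOn_of_deriv_nonneg (convex_Icc a b)
  · exact fun t ht => (hd t ht).continuousAt.continuousWithinAt
  · rw [interior_Icc]
    exact fun t ht => ((hd t (Ioo_subset_Icc_self ht)).differentiableAt).differentiableWithinAt
  · rw [interior_Icc]
    intro t ht
    rw [(hd t (Ioo_subset_Icc_self ht)).deriv]
    exact h0 t ht

/-- linear growth from derivative lower bound -/
lemma my_grow {f g : ℝ → ℝ} {a c : ℝ} (hd : ∀ t ∈ Ici a, HasDerivAt f (g t) t)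
    (hg : ∀ t ∈ Ici a, c ≤ g t) : ∀ t ≥ a, f a + c * (t - a) ≤ f t := by
  intro t ht
  have hm : MonotoneOn (fun t => f t - c * t) (Ici a) := by
    apply my_monoOn (g := fun t => g t - c)
    · intro u hu
      have := (hd u hu).sub ((hasDerivAt_id u).const_mul c)
      exact this.congr_deriv (by simp)
    · exact fun u hu => sub_nonneg.mpr (hg u (mem_Ici.mpr (le_of_lt (mem_Ioi.mp hu))))
  have := hm (self_mem_Ici) (mem_Ici.mpr ht) ht
  simp only at this
  linarith

/-- blow-up: y'' ≥ 1 on a ray and y bounded above gives False -/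
lemma my_blowup {y : ℝ → ℝ} {a M : ℝ} (hy : ContDiff ℝ 2 y)
    (h2 : ∀ t ∈ Ici a, (1:ℝ) ≤ deriv (deriv y) t) (hM : ∀ t ∈ Ici a, y t ≤ M) : False := by
  have hgrow1 := my_grow (fun t ht => my_hd2 hy t) h2
  set b := max a (a + 1 - deriv y a) with hb
  have hba : a ≤ b := le_max_left _ _
  have hd1 : ∀ t ∈ Ici b, (1:ℝ) ≤ deriv y t := by
    intro t ht
    have htb : b ≤ t := ht
    have := hgrow1 t (le_trans hba htb)
    have : deriv y a + 1 * (t - a) ≤ deriv y t := this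
    have h3 : a + 1 - deriv y a ≤ b := le_max_right _ _
    linarith
  have hgrow2 := my_grow (f := y) (g := deriv y) (fun t _ => my_hd1 hy t) hd1
  set T := max b (b + (M - y b) + 1) with hT
  have h4 := hgrow2 T (le_max_left _ _)
  have h5 := hM T (le_trans hba (le_max_left _ _))
  have h6 : b + (M - y b) + 1 ≤ T := le_max_right _ _
  linarith

section
variable {α : ℝ} {y : ℝ → ℝ}

/-- no escape upward -/
lemma my_not_up (hy : ContDiff ℝ 2 y)
    (heq : ∀ s : ℝ, deriv (deriv y) s = s * y s + 2 * (y s) ^ 3 + α)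
    {m M δ S : ℝ} (hM : ∀ s, m ≤ s → |y s| ≤ M) (hδ : 0 < δ) (hSm : m ≤ S)
    (hS : ∀ t, S ≤ t → δ / 2 ≤ y t → (1:ℝ) ≤ deriv (deriv y) t)
    {s₀ : ℝ} (hs₀ : S ≤ s₀) (h1 : δ ≤ y s₀) (h2 : 0 ≤ deriv y s₀) : False := by
  classical
  set A : Set ℝ := {t | s₀ ≤ t ∧ y t ≤ δ / 2} with hA
  by_cases hne : A.Nonempty
  · -- c = inf A, derive contradiction
    have hclosed : IsClosed A := by
      have : A = Ici s₀ ∩ y ⁻¹' (Iic (δ / 2)) := by ext t; simp [hA, and_comm] <;> tauto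
      rw [this]
      exact isClosed_Ici.inter (isClosed_Iic.preimage hy.continuous)
    have hbdd : BddBelow A := ⟨s₀, fun t ht => ht.1⟩
    set c := sInf A with hc
    have hcA : c ∈ A := hclosed.csInf_mem hne hbdd
    have hc1 : s₀ ≤ c := hcA.1
    have hc2 : y c ≤ δ / 2 := hcA.2
    have hlow : ∀ t ∈ Ico s₀ c, δ / 2 ≤ y t := by
      intro t ht
      by_contra hcon
      have : t ∈ A := ⟨ht.1, le_of_not_ge hcon⟩
      exact absurd (csInf_le hbdd this) (not_le.mpr ht.2)
    -- deriv y monotone on Icc s₀ c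
    have hmono1 : MonotoneOn (deriv y) (Icc s₀ c) := by
      apply my_monoOn_Icc (g := deriv (deriv y)) (fun t _ => my_hd2 hy t)
      intro t ht
      have h := hS t (le_trans hs₀ (le_of_lt ht.1)) (hlow t ⟨le_of_lt ht.1, ht.2⟩)
      linarith
    have hd0 : ∀ t ∈ Ioo s₀ c, 0 ≤ deriv y t := by
      intro t ht
      have := hmono1 (left_mem_Icc.mpr hc1) ⟨le_of_lt ht.1, le_of_lt ht.2⟩ (le_of_lt ht.1)
      linarith
    have hmono2 : MonotoneOn y (Icc s₀ c) := by
      apply my_monoOn_Icc (g := deriv y) (fun t _ => my_hd1 hy t) hd0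
    have := hmono2 (left_mem_Icc.mpr hc1) (right_mem_Icc.mpr hc1) hc1
    linarith
  · -- A empty: y > δ/2 on all of Ici s₀, blow up
    have hall : ∀ t ∈ Ici s₀, δ / 2 ≤ y t := by
      intro t ht
      by_contra hcon
      exact hne ⟨t, ht, le_of_not_ge hcon⟩
    apply my_blowup hy (a := s₀) (M := M)
    · exact fun t ht => hS t (le_trans hs₀ ht) (hall t ht)
    · intro t ht
      have := hM t (le_trans (le_trans hSm hs₀) ht)
      exact le_trans (le_abs_self _) this

/-- eventually y < δ -/
lemma my_event (hy : ContDiff ℝ 2 y)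
    (heq : ∀ s : ℝ, deriv (deriv y) s = s * y s + 2 * (y s) ^ 3 + α)
    {m M : ℝ} (hM : ∀ s, m ≤ s → |y s| ≤ M) {δ : ℝ} (hδ : 0 < δ) :
    ∀ᶠ s in atTop, y s < δ := by
  classical
  set S := max m (2 * (1 + |α|) / δ) with hSdef
  have hSm : m ≤ S := le_max_left _ _
  have hS0 : 0 < S := lt_of_lt_of_le (by positivity) (le_max_right _ _)
  have hS : ∀ t, S ≤ t → δ / 2 ≤ y t → (1:ℝ) ≤ deriv (deriv y) t := by
    intro t ht hyt
    rw [heq t]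
    have ht2 : 2 * (1 + |α|) / δ ≤ t := le_trans (le_max_right _ _) ht
    have ht0 : 0 < t := lt_of_lt_of_le hS0 ht
    have hty : 2 * (1 + |α|) / δ * (δ / 2) ≤ t * y t := by
      apply mul_le_mul ht2 hyt (by positivity) (le_of_lt ht0)
    have heval : 2 * (1 + |α|) / δ * (δ / 2) = 1 + |α| := by field_simp
    have hyt0 : (0:ℝ) ≤ y t := by linarith
    have hcube : 0 ≤ 2 * (y t) ^ 3 := by positivity
    have : -|α| ≤ α := neg_abs_le α
    nlinarith
  -- step 1 : exists s₁ ≥ S with y s₁ < δ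
  have hstep1 : ∃ s₁, S ≤ s₁ ∧ y s₁ < δ := by
    by_contra hcon
    push_neg at hcon
    apply my_blowup hy (a := S) (M := M)
    · intro t ht
      exact hS t ht (by linarith [hcon t ht])
    · exact fun t ht => le_trans (le_abs_self _) (hM t (le_trans hSm ht))
  obtain ⟨s₁, hs₁S, hs₁⟩ := hstep1
  rw [eventually_atTop]
  refine ⟨s₁, fun t ht => ?_⟩
  by_contra hcon
  push_neg at hcon
  -- first time ≥ s₁ where y ≥ δ
  set A : Set ℝ := {u | s₁ ≤ u ∧ δ ≤ y u} with hA
  have hclosed : IsClosed A := by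
    have : A = Ici s₁ ∩ y ⁻¹' (Ici δ) := by ext u; simp [hA] <;> tauto
    rw [this]
    exact isClosed_Ici.inter (isClosed_Ici.preimage hy.continuous)
  have hne : A.Nonempty := ⟨t, ht, hcon⟩
  have hbdd : BddBelow A := ⟨s₁, fun u hu => hu.1⟩
  set c := sInf A with hc
  have hcA : c ∈ A := hclosed.csInf_mem hne hbdd
  have hc1 : s₁ ≤ c := hcA.1
  have hc2 : δ ≤ y c := hcA.2
  have hcs : s₁ < c := by
    rcases lt_or_eq_of_le hc1 with h | h
    · exact h
    · exfalso; rw [← h] at hc2; linarith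
  have hlt : ∀ u ∈ Ico s₁ c, y u < δ := by
    intro u hu
    by_contra hc3
    have : u ∈ A := ⟨hu.1, le_of_not_gt hc3⟩
    exact absurd (csInf_le hbdd this) (not_le.mpr hu.2)
  -- deriv y c ≥ 0 from left slopes
  have hd0 : 0 ≤ deriv y c := by
    have hslope : Tendsto (slope y c) (𝓝[<] c) (𝓝 (deriv y c)) := by
      apply (hasDerivAt_iff_tendsto_slope.mp (my_hd1 hy c)).mono_left
      exact nhdsWithin_mono c (fun x hx => ne_of_lt hx)
    refine ge_of_tendsto hslope ?_
    filter_upwards [Ioo_mem_nhdsLT_of_mem (Set.right_mem_Ioc.mpr hcs)] with u hu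
    have hyu : y u < δ := hlt u ⟨le_of_lt hu.1, hu.2⟩
    have h1 : y u - y c ≤ 0 := by linarith
    have h2 : u - c < 0 := by linarith [hu.2]
    rw [slope_def_field]
    rw [div_nonneg_iff]
    right
    constructor <;> [linarith; linarith]
  exact my_not_up hy heq hM hδ hSm hS (le_trans hs₁S (le_of_lt hcs)) hc2 hd0
end
section
variable {α : ℝ} {y : ℝ → ℝ}

lemma my_tendsto_zero (hy : ContDiff ℝ 2 y)
    (heq : ∀ s : ℝ, deriv (deriv y) s = s * y s + 2 * (y s) ^ 3 + α)
    {m M : ℝ} (hM : ∀ s, m ≤ s → |y s| ≤ M) :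
    Tendsto y atTop (𝓝 0) := by
  have hz : ContDiff ℝ 2 (fun s => -y s) := hy.neg
  have hdz : deriv (fun s => -y s) = fun s => -(deriv y s) := by
    funext s; exact deriv.neg
  have heqz : ∀ s : ℝ, deriv (deriv (fun s => -y s)) s
      = s * (-y s) + 2 * (-y s) ^ 3 + (-α) := by
    intro s
    rw [hdz]
    have : deriv (fun s => -(deriv y s)) s = -(deriv (deriv y) s) := deriv.neg
    rw [this, heq s]
    ring
  have hMz : ∀ s, m ≤ s → |(fun s => -y s) s| ≤ M := by
    intro s hs; simpa [abs_neg] using hM s hs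
  rw [Metric.tendsto_atTop]
  intro ε hε
  have h1 := my_event hy heq hM hε
  have h2 := my_event hz heqz hMz hε
  rw [eventually_atTop] at h1 h2
  obtain ⟨N1, hN1⟩ := h1
  obtain ⟨N2, hN2⟩ := h2
  refine ⟨max N1 N2, fun n hn => ?_⟩
  have ha := hN1 n (le_trans (le_max_left _ _) hn)
  have hb := hN2 n (le_trans (le_max_right _ _) hn)
  rw [Real.dist_eq, sub_zero, abs_lt]
  constructor <;> linarith
end
set_option maxHeartbeats 1000000 in
theorem stmt16' (α : ℝ) (hα : α < 0) (y : ℝ → ℝ)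
    (hy2 : ContDiff ℝ 2 y)
    (heq : ∀ s : ℝ, deriv (deriv y) s = s * y s + 2 * (y s) ^ 3 + α)
    (m M : ℝ) (hM : ∀ s : ℝ, m ≤ s → |y s| ≤ M) :
    Antitone (fun s => (deriv y s) ^ 2 - s * (y s) ^ 2 - (y s) ^ 4 - 2 * α * y s) ∧
    Filter.Tendsto (fun s => (deriv y s) ^ 2 - s * (y s) ^ 2 - (y s) ^ 4 - 2 * α * y s)
      Filter.atTop (𝓝 0) := by
  set θ : ℝ → ℝ := fun s => (deriv y s) ^ 2 - s * (y s) ^ 2 - (y s) ^ 4 - 2 * α * y s with hθdef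
  have hθ' : ∀ s : ℝ, HasDerivAt θ (-(y s) ^ 2) s := my_theta_deriv hy2 heq
  have hanti : Antitone θ := by
    apply antitone_of_deriv_nonpos (fun s => (hθ' s).differentiableAt)
    intro s
    rw [(hθ' s).deriv]
    exact neg_nonpos.mpr (sq_nonneg _)
  have hy0 : Tendsto y atTop (𝓝 0) := my_tendsto_zero hy2 heq hM
  refine ⟨hanti, ?_⟩
  -- setup
  set S := max m 1 with hSdef
  have hS1 : (1:ℝ) ≤ S := le_max_right _ _
  have hSm : m ≤ S := le_max_left _ _
  have hS0 : (0:ℝ) < S := by linarith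
  have hM0 : 0 ≤ M := le_trans (abs_nonneg _) (hM S hSm)
  set C₀ := M ^ 4 + 2 * |α| * M with hC₀
  have hlow : ∀ t, S ≤ t → -(t * (y t) ^ 2) - C₀ ≤ θ t := by
    intro t ht
    have hyt : |y t| ≤ M := hM t (le_trans hSm ht)
    have h4 : (y t) ^ 4 ≤ M ^ 4 := by
      calc (y t) ^ 4 = |y t| ^ 4 := by rw [← abs_pow]; rw [abs_of_nonneg (by positivity)]
      _ ≤ M ^ 4 := by exact pow_le_pow_left₀ (abs_nonneg _) hyt 4
    have h5 : 2 * α * y t ≤ 2 * |α| * M := by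
      calc 2 * α * y t ≤ |2 * α * y t| := le_abs_self _
      _ = 2 * |α| * |y t| := by rw [abs_mul, abs_mul]; simp [abs_of_nonneg]
      _ ≤ 2 * |α| * M := by
          apply mul_le_mul_of_nonneg_left hyt (by positivity)
    have h6 : 0 ≤ (deriv y t) ^ 2 := sq_nonneg _
    simp only [hθdef, hC₀]
    nlinarith
  -- the function u and its monotone quotient
  set C₁ := θ S + C₀ with hC₁
  set u : ℝ → ℝ := fun t => (θ S - θ t) - C₁ with hu
  have hu' : ∀ t : ℝ, HasDerivAt u ((y t) ^ 2) t := by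
    intro t
    have := ((hθ' t).const_sub (θ S)).sub_const C₁
    exact this.congr_deriv (by ring)
  have hkey : ∀ t, S ≤ t → u t ≤ t * (y t) ^ 2 := by
    intro t ht
    have := hlow t ht
    simp only [hu, hC₁]
    linarith
  have hmonoq : MonotoneOn (fun t => u t / t) (Ici S) := by
    apply my_monoOn (g := fun t => ((y t) ^ 2 * t - u t * 1) / t ^ 2)
    · intro t ht
      have ht0 : t ≠ 0 := by have : S ≤ t := ht; linarith [hS0, this]
      exact (hu' t).div (hasDerivAt_id t) ht0
    · intro t ht
      have htS : S < t := ht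
      have ht0 : 0 < t := lt_trans hS0 htS
      apply div_nonneg _ (by positivity)
      have := hkey t (le_of_lt htS)
      nlinarith
  -- θ is bounded below
  have hbb : BddBelow (Set.range θ) := by
    have hcase : ∀ t, S ≤ t → u t ≤ 0 := by
      by_contra hcon
      push_neg at hcon
      obtain ⟨s₁, hs₁S, hs₁⟩ := hcon
      have hs₁0 : 0 < s₁ := lt_of_lt_of_le hS0 hs₁S
      set K := u s₁ / s₁ with hK
      have hK0 : 0 < K := div_pos hs₁ hs₁0
      have hsq : ∀ t, s₁ ≤ t → K ≤ (y t) ^ 2 := by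
        intro t ht
        have ht0 : 0 < t := lt_of_lt_of_le hs₁0 ht
        have h1 : K ≤ u t / t :=
          hmonoq (mem_Ici.mpr hs₁S) (mem_Ici.mpr (le_trans hs₁S ht)) ht
        have h2 : u t ≤ t * (y t) ^ 2 := hkey t (le_trans hs₁S ht)
        rw [le_div_iff₀ ht0] at h1
        nlinarith
      have hev : ∀ᶠ t in atTop, (y t) ^ 2 < K := by
        have h2 : Tendsto (fun t => (y t) ^ 2) atTop (𝓝 0) := by
          have := hy0.pow 2
          simpa using this
        exact h2.eventually (gt_mem_nhds hK0)
      rw [eventually_atTop] at hev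
      obtain ⟨N, hN⟩ := hev
      have h3 := hsq (max s₁ N) (le_max_left _ _)
      have h4 := hN (max s₁ N) (le_max_right _ _)
      linarith
    refine ⟨min (θ S) (θ S - C₁), ?_⟩
    rintro x ⟨t, rfl⟩
    rcases le_total t S with h | h
    · exact le_trans (min_le_left _ _) (hanti h)
    · have := hcase t h
      simp only [hu] at this
      have : θ S - C₁ ≤ θ t := by linarith
      exact le_trans (min_le_right _ _) this
  set L := ⨅ t, θ t with hL
  have htend : Tendsto θ atTop (𝓝 L) := tendsto_atTop_ciInf hanti hbb
  have hLle : ∀ t, L ≤ θ t := fun t => ciInf_le hbb t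
  -- FTC
  have hftc : ∀ a b : ℝ, θ a - θ b = ∫ s in a..b, (y s) ^ 2 := by
    intro a b
    have hint : IntervalIntegrable (fun s => -(y s) ^ 2) MeasureTheory.volume a b :=
      (((hy2.continuous.pow 2).neg).intervalIntegrable a b)
    have h1 := intervalIntegral.integral_eq_sub_of_hasDerivAt
      (f := θ) (f' := fun s => -(y s) ^ 2) (fun x _ => hθ' x) hint
    have h2 : (∫ s in a..b, -(y s) ^ 2) = -∫ s in a..b, (y s) ^ 2 := by
      rw [intervalIntegral.integral_neg]
    rw [h2] at h1
    linarith
  -- small points: ∀ ε > 0 ∀ T ∃ t ≥ T, t y t ^ 2 < ε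
  have hsmall : ∀ ε : ℝ, 0 < ε → ∀ T : ℝ, ∃ t, T ≤ t ∧ t * (y t) ^ 2 < ε := by
    intro ε hε T
    by_contra hcon
    push_neg at hcon
    set T' := max T S with hT'
    have hT'S : S ≤ T' := le_max_right _ _
    have hT'0 : 0 < T' := lt_of_lt_of_le hS0 hT'S
    set v := (θ T' - L) / ε + 1 with hv
    have hv1 : 1 ≤ v := by
      rw [hv]
      have : 0 ≤ (θ T' - L) / ε := div_nonneg (by linarith [hLle T']) (le_of_lt hε)
      linarith
    set t' := T' * Real.exp v with ht'
    have ht'T : T' ≤ t' := by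
      have h1 : (1:ℝ) ≤ Real.exp v := Real.one_le_exp (by linarith)
      calc T' = T' * 1 := by ring
      _ ≤ T' * Real.exp v := by nlinarith
    have ht'0 : 0 < t' := lt_of_lt_of_le hT'0 ht'T
    -- integral comparison
    have hintle : (∫ s in T'..t', ε * (1 / s)) ≤ ∫ s in T'..t', (y s) ^ 2 := by
      apply intervalIntegral.integral_mono_on ht'T
      · apply ContinuousOn.intervalIntegrable
        rw [uIcc_of_le ht'T]
        apply ContinuousOn.mul continuousOn_const
        apply ContinuousOn.div continuousOn_const continuousOn_id
        intro x hx
        have : T' ≤ x := hx.1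
        exact ne_of_gt (lt_of_lt_of_le hT'0 this)
      · exact ((hy2.continuous.pow 2).intervalIntegrable _ _)
      · intro x hx
        have hx0 : 0 < x := lt_of_lt_of_le hT'0 hx.1
        have h1 : ε ≤ x * (y x) ^ 2 := hcon x (le_trans (le_max_left _ _) hx.1)
        rw [mul_one_div, div_le_iff₀ hx0]
        linarith [mul_comm ((y x) ^ 2) x]
    have hcalc : (∫ s in T'..t', ε * (1 / s)) = ε * Real.log (t' / T') := by
      rw [intervalIntegral.integral_const_mul, integral_one_div]
      rw [uIcc_of_le ht'T]
      intro h0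
      exact absurd h0.1 (not_le.mpr hT'0)
    have hlogval : Real.log (t' / T') = v := by
      rw [ht', mul_comm, mul_div_assoc, div_self (ne_of_gt hT'0), mul_one, Real.log_exp]
    have hub : (∫ s in T'..t', (y s) ^ 2) ≤ θ T' - L := by
      rw [← hftc T' t']
      linarith [hLle t']
    rw [hcalc, hlogval, hv] at hintle
    have : ε * ((θ T' - L) / ε + 1) = (θ T' - L) + ε := by field_simp
    rw [this] at hintle
    linarith
  -- L ≥ 0
  have hge : 0 ≤ L := by
    by_contra hneg
    push_neg at hneg
    set ε := -L / 4 with hε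
    have hε0 : 0 < ε := by simp only [hε]; linarith
    -- eventually the quartic+linear term is small
    have hev : ∀ᶠ t in atTop, -(ε) ≤ -((y t) ^ 4) - 2 * α * y t := by
      have habs0 : Tendsto (fun t => |y t|) atTop (𝓝 0) := by
        simpa using hy0.abs
      have h0 : (0:ℝ) < min 1 (ε / (1 + 2 * |α|)) := by
        apply lt_min one_pos
        positivity
      have hsm : ∀ᶠ t in atTop, |y t| < min 1 (ε / (1 + 2 * |α|)) :=
        habs0.eventually (gt_mem_nhds h0)
      filter_upwards [hsm] with t hts
      have h1 : |y t| ≤ 1 := le_of_lt (lt_of_lt_of_le hts (min_le_left _ _))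
      have h2 : |y t| ≤ ε / (1 + 2 * |α|) := le_of_lt (lt_of_lt_of_le hts (min_le_right _ _))
      have h3 : (y t) ^ 4 + 2 * α * y t ≤ ε := by
        have h4 : (y t) ^ 4 ≤ |y t| := by
          have : (y t) ^ 4 = |y t| ^ 4 := by
            rw [← abs_pow, abs_of_nonneg (by positivity)]
          rw [this]
          calc |y t| ^ 4 ≤ |y t| ^ 1 := by
                apply pow_le_pow_of_le_one (abs_nonneg _) h1 (by norm_num)
          _ = |y t| := pow_one _
        have h5 : 2 * α * y t ≤ 2 * |α| * |y t| := by
          calc 2 * α * y t ≤ |2 * α * y t| := le_abs_self _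
          _ = 2 * |α| * |y t| := by rw [abs_mul, abs_mul]; simp
        have h6 : (1 + 2 * |α|) * |y t| ≤ ε := by
          rw [← le_div_iff₀' (by positivity : (0:ℝ) < 1 + 2 * |α|)]
          exact h2
        nlinarith [abs_nonneg (y t), abs_nonneg α, le_abs_self (y t)]
      linarith
    rw [eventually_atTop] at hev
    obtain ⟨T₀, hT₀⟩ := hev
    have hθlb : ∀ s : ℝ, -(2 * ε) ≤ θ s := by
      intro s
      obtain ⟨t, ht1, ht2⟩ := hsmall ε hε0 (max s (max T₀ 1))
      have hts : s ≤ t := le_trans (le_max_left _ _) ht1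
      have htT₀ : T₀ ≤ t := le_trans (le_trans (le_max_left _ _) (le_max_right _ _)) ht1
      have ht1' : (1:ℝ) ≤ t := le_trans (le_trans (le_max_right _ _) (le_max_right _ _)) ht1
      have h7 := hT₀ t htT₀
      have h8 : 0 ≤ (deriv y t) ^ 2 := sq_nonneg _
      have h9 : θ t = (deriv y t) ^ 2 - t * (y t) ^ 2 - (y t) ^ 4 - 2 * α * y t := rfl
      have h10 : -(2 * ε) ≤ θ t := by rw [h9]; linarith
      exact le_trans h10 (hanti hts)
    have : -(2 * ε) ≤ L := le_ciInf hθlb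
    simp only [hε] at this
    linarith
  -- L ≤ 0
  have hle : L ≤ 0 := by
    by_contra hpos
    push_neg at hpos
    set c := Real.sqrt (L / 2) with hcdef
    have hc0 : 0 < c := Real.sqrt_pos.mpr (by linarith)
    have hc2 : c ^ 2 = L / 2 := Real.sq_sqrt (by linarith)
    set η := L / (2 * (2 * |α| + 1)) with hη
    have hη0 : 0 < η := by positivity
    have habs0 : Tendsto (fun t => |y t|) atTop (𝓝 0) := by
      simpa using hy0.abs
    have hevs : ∀ᶠ s in atTop, |y s| < η := habs0.eventually (gt_mem_nhds hη0)
    rw [eventually_atTop] at hevs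
    obtain ⟨T₁', hT₁'⟩ := hevs
    set T₁ := max T₁' (max m 1) with hT₁def
    have hT₁1 : (1:ℝ) ≤ T₁ := le_trans (le_max_right _ _) (le_max_right _ _)
    have hT₁m : m ≤ T₁ := le_trans (le_max_left _ _) (le_max_right _ _)
    have hT₁' : ∀ s, T₁ ≤ s → |y s| < η := fun s hs => hT₁' s (le_trans (le_max_left _ _) hs)
    have hder : ∀ s, T₁ ≤ s → c ^ 2 ≤ (deriv y s) ^ 2 := by
      intro s hs
      have h1 : L ≤ θ s := hLle s
      have h2 : θ s = (deriv y s) ^ 2 - s * (y s) ^ 2 - (y s) ^ 4 - 2 * α * y s := rfl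
      have h3 : 2 * α * y s ≥ -(L / 2) := by
        have h4 : |2 * α * y s| ≤ L / 2 := by
          rw [abs_mul, abs_mul]
          have h5 : |y s| ≤ η := le_of_lt (hT₁' s hs)
          have h6 : |(2:ℝ)| = 2 := by norm_num
          rw [h6]
          have h7 : η * (2 * |α| + 1) = L / 2 := by
            rw [hη]; field_simp
          have h8 : 2 * |α| * |y s| ≤ 2 * |α| * η :=
            mul_le_mul_of_nonneg_left h5 (by positivity)
          linarith [abs_nonneg α, hη0]
        have := abs_le.mp h4
        linarith [this.1]
      have hs0 : (0:ℝ) < s := lt_of_lt_of_le one_pos (le_trans hT₁1 hs)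
      have h8 : 0 ≤ s * (y s) ^ 2 := by positivity
      have h9 : 0 ≤ (y s) ^ 4 := by positivity
      rw [h2] at h1
      rw [hc2]
      linarith
    have habs : ∀ s, T₁ ≤ s → c ≤ |deriv y s| := by
      intro s hs
      by_contra hcon
      push_neg at hcon
      have := pow_lt_pow_left₀ hcon (abs_nonneg _) (by norm_num : 2 ≠ 0)
      have h2 := hder s hs
      linarith [sq_abs (deriv y s)]
    -- sign dichotomy and contradiction with boundedness
    have hcontra : False := by
      rcases le_or_gt 0 (deriv y T₁) with hsgn | hsgn
      · -- deriv y ≥ c on [T₁, ∞)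
        have hpos' : ∀ s, T₁ ≤ s → c ≤ deriv y s := by
          intro s hs
          by_contra hcon
          push_neg at hcon
          have h1 : deriv y s ≤ -c := by
            have haux := habs s hs
            rcases abs_cases (deriv y s) with ⟨he, _⟩ | ⟨he, _⟩ <;>
              rw [he] at haux <;> linarith
          have h2 : c ≤ deriv y T₁ := by
            have := habs T₁ le_rfl
            rcases abs_cases (deriv y T₁) with ⟨he, _⟩ | ⟨he, hneg⟩
            · rw [he] at this; exact this
            · linarith
          have hT₁s : T₁ ≤ s := hs
          have hcont := (my_cont_deriv hy2).continuousOn (s := Icc T₁ s)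
          have hiv := intermediate_value_Icc' hT₁s hcont
          have h0mem : (0:ℝ) ∈ Icc (deriv y s) (deriv y T₁) := by
            constructor <;> linarith
          obtain ⟨u', hu'mem, hu'eq⟩ := hiv h0mem
          have := habs u' hu'mem.1
          rw [hu'eq] at this
          simp at this
          linarith
        have hgrow := my_grow (f := y) (g := deriv y) (a := T₁) (c := c)
          (fun t _ => my_hd1 hy2 t) hpos'
        set t₂ := max T₁ (T₁ + (M + 1 + |y T₁|) / c) with ht₂
        have h1 := hgrow t₂ (le_max_left _ _)
        have h2 : M + 1 + |y T₁| ≤ c * (t₂ - T₁) := by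
          have h3 : T₁ + (M + 1 + |y T₁|) / c ≤ t₂ := le_max_right _ _
          have h4 : (M + 1 + |y T₁|) / c ≤ t₂ - T₁ := by linarith
          calc M + 1 + |y T₁| = c * ((M + 1 + |y T₁|) / c) := by field_simp
          _ ≤ c * (t₂ - T₁) := by nlinarith
        have h5 := hM t₂ (le_trans hT₁m (le_max_left _ _))
        have h6 : y t₂ ≤ M := le_trans (le_abs_self _) h5
        have h7 : -|y T₁| ≤ y T₁ := neg_abs_le _
        linarith
      · -- deriv y ≤ -c on [T₁, ∞)
        have hneg' : ∀ s, T₁ ≤ s → c ≤ -(deriv y s) := by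
          intro s hs
          by_contra hcon
          push_neg at hcon
          have h1 : c ≤ deriv y s := by
            have := habs s hs
            rcases abs_cases (deriv y s) with ⟨he, _⟩ | ⟨he, _⟩
            · rw [he] at this; exact this
            · rw [he] at this; linarith
          have h2 : deriv y T₁ ≤ -c := by
            have := habs T₁ le_rfl
            rcases abs_cases (deriv y T₁) with ⟨he, hnn⟩ | ⟨he, _⟩
            · linarith
            · rw [he] at this; linarith
          have hT₁s : T₁ ≤ s := hs
          have hcont := (my_cont_deriv hy2).continuousOn (s := Icc T₁ s)
          have hiv := intermediate_value_Icc hT₁s hcont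
          have h0mem : (0:ℝ) ∈ Icc (deriv y T₁) (deriv y s) := by
            constructor <;> linarith
          obtain ⟨u', hu'mem, hu'eq⟩ := hiv h0mem
          have := habs u' hu'mem.1
          rw [hu'eq] at this
          simp at this
          linarith
        have hgrow := my_grow (f := fun t => -(y t)) (g := fun t => -(deriv y t)) (a := T₁) (c := c)
          (fun t _ => (my_hd1 hy2 t).neg) hneg'
        set t₂ := max T₁ (T₁ + (M + 1 + |y T₁|) / c) with ht₂
        have h1 := hgrow t₂ (le_max_left _ _)
        have h2 : M + 1 + |y T₁| ≤ c * (t₂ - T₁) := by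
          have h3 : T₁ + (M + 1 + |y T₁|) / c ≤ t₂ := le_max_right _ _
          have h4 : (M + 1 + |y T₁|) / c ≤ t₂ - T₁ := by linarith
          calc M + 1 + |y T₁| = c * ((M + 1 + |y T₁|) / c) := by field_simp
          _ ≤ c * (t₂ - T₁) := by nlinarith
        have h5 := hM t₂ (le_trans hT₁m (le_max_left _ _))
        have h6 : -M ≤ y t₂ := by
          have := abs_le.mp h5; exact this.1
        have h7 : y T₁ ≤ |y T₁| := le_abs_self _
        linarith
    exact hcontra
  have hL0 : L = 0 := le_antisymm hle hge
  rw [← hL0]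
  exact htend

end PainleveAux

/-- For a solution of Painlevé II (`α < 0`) bounded near `+∞`, the quantity
`θ(s) = y'(s)² - s y(s)² - y(s)⁴ - 2α y(s)` is nonincreasing and tends to `0` at `+∞`. -/
theorem stmt16 (α : ℝ) (hα : α < 0) (y : ℝ → ℝ) (hy : PainleveSol α y)
    (hbdd : ∃ m M : ℝ, ∀ s : ℝ, m ≤ s → |y s| ≤ M) :
    Antitone (fun s => (deriv y s) ^ 2 - s * (y s) ^ 2 - (y s) ^ 4 - 2 * α * y s) ∧
    Filter.Tendsto (fun s => (deriv y s) ^ 2 - s * (y s) ^ 2 - (y s) ^ 4 - 2 * α * y s)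
      Filter.atTop (𝓝 0) := by
  obtain ⟨hy2, heq⟩ := hy
  obtain ⟨m, M, hM⟩ := hbdd
  exact stmt16' α hα y hy2 heq m M hM
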